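/- arXiv:1805.01685 — 4 statements merged into one kernel-verified Lean document; each statement's English description precedes it below -/
import Mathlib

section
/- Let a_1,…,a_m > 0, k ≥ m an integer, Z = 1/Σ_j a_j, and α_i = Z·a_i·k. There is no optimal solution ỹ ∈ ℤ_+^m (minimizing Σ_i a_i²/y_i subject to Σ_i y_i ≤ k) such that for some i, j: ỹ_i ≤ ⌊α_i⌋ − 1, and either ỹ_j ≥ ⌈α_j⌉ + 1, or both ỹ_j = ⌈α_j⌉ and ⌈α_j⌉·(⌈α_j⌉ − 1) ≥ α_j². -/
/-- no optimal integral OSA solution ỹ can have some coordinate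
at most ⌊α_i⌋ − 1 while another coordinate is at ⌈α_j⌉ + 1 or more, or at
⌈α_j⌉ with ⌈α_j⌉(⌈α_j⌉−1) ≥ α_j². -/
theorem stmt8 (m k : ℕ) (hm : 2 ≤ m) (hk : m ≤ k)
    (a : Fin m → ℝ) (ha : ∀ i, 0 < a i)
    (α : Fin m → ℝ) (hα : ∀ i, α i = (k : ℝ) * a i / ∑ j, a j)
    (ytil : Fin m → ℕ) (h1 : ∀ l, 1 ≤ ytil l) (hbud : ∑ l, ytil l ≤ k)
    (hopt : ∀ z : Fin m → ℕ, (∀ l, 1 ≤ z l) → ∑ l, z l ≤ k →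
      ∑ l, (a l) ^ 2 / (ytil l : ℝ) ≤ ∑ l, (a l) ^ 2 / (z l : ℝ)) :
    ¬ ∃ i j : Fin m,
      ((ytil i : ℝ) ≤ (⌊α i⌋ : ℝ) - 1 ∧
       (((⌈α j⌉ : ℝ) + 1 ≤ (ytil j : ℝ)) ∨
        ((ytil j : ℝ) = (⌈α j⌉ : ℝ) ∧ (α j) ^ 2 ≤ (⌈α j⌉ : ℝ) * ((⌈α j⌉ : ℝ) - 1)))) := by
  rintro ⟨i, j, hi, hj⟩
  have hSpos : 0 < ∑ l, a l :=
    Finset.sum_pos (fun l _ => ha l) ⟨⟨0, by omega⟩, Finset.mem_univ _⟩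
  have hkpos : (0:ℝ) < k := by
    have : 0 < k := by omega
    exact_mod_cast this
  have hαpos : ∀ l, 0 < α l := by
    intro l; rw [hα]
    exact div_pos (mul_pos hkpos (ha l)) hSpos
  have hyi1 : (1:ℝ) ≤ (ytil i : ℝ) := by exact_mod_cast h1 i
  have hyiα : (ytil i : ℝ) + 1 ≤ α i := by
    have := Int.floor_le (α i)
    linarith
  -- Facts about coordinate j
  have hjfacts : 2 ≤ ytil j ∧ (α j)^2 ≤ (ytil j : ℝ) * ((ytil j : ℝ) - 1) := by
    have hc : α j ≤ (⌈α j⌉ : ℝ) := Int.le_ceil _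
    have hc1 : (1:ℝ) ≤ (⌈α j⌉ : ℝ) := by
      have : (0:ℤ) < ⌈α j⌉ := Int.ceil_pos.mpr (hαpos j)
      exact_mod_cast this
    rcases hj with hj | ⟨hj1, hj2⟩
    · constructor
      · have h2 : (2:ℝ) ≤ (ytil j : ℝ) := by linarith
        exact_mod_cast h2
      · nlinarith [hαpos j]
    · constructor
      · have h2 : (1:ℝ) < (ytil j : ℝ) := by nlinarith [hαpos j]
        have : 1 < ytil j := by exact_mod_cast h2
        omega
      · rw [hj1]; linarith
  obtain ⟨hyj2, hjsq⟩ := hjfacts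
  have hyj2R : (2:ℝ) ≤ (ytil j : ℝ) := by exact_mod_cast hyj2
  have hij : i ≠ j := by
    intro h
    rw [h] at hyiα hyi1
    nlinarith [hαpos j]
  -- the improved solution
  set z : Fin m → ℕ := fun l => if l = i then ytil i + 1 else if l = j then ytil j - 1 else ytil l
    with hz
  have hz1 : ∀ l, 1 ≤ z l := by
    intro l
    simp only [hz]
    split
    · omega
    · split
      · omega
      · exact h1 l
  have hzsum : ∑ l, z l = ∑ l, ytil l := by
    have hint : ∑ l, (z l : ℤ) = ∑ l, (ytil l : ℤ) := by
      have hpt : ∀ l, (z l : ℤ) = (ytil l : ℤ) + ((if l = i then (1:ℤ) else 0) + (if l = j then (-1:ℤ) else 0)) := by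
        intro l
        simp only [hz]
        by_cases h1' : l = i
        · subst h1'; simp [hij]
        · by_cases h2' : l = j
          · subst h2'
            rw [if_neg h1', if_pos rfl, if_neg h1', if_pos rfl,
              Nat.cast_sub (by omega : 1 ≤ ytil l)]
            ring
          · simp [h1', h2']
      rw [Finset.sum_congr rfl fun l _ => hpt l, Finset.sum_add_distrib,
        Finset.sum_add_distrib]
      simp [Finset.sum_ite_eq']
    exact_mod_cast hint
  have hzbud : ∑ l, z l ≤ k := hzsum ▸ hbud
  have hle := hopt z hz1 hzbud
  -- compute the difference of objective values
  have hcast_i : ((z i : ℕ) : ℝ) = (ytil i : ℝ) + 1 := by simp [hz]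
  have hcast_j : ((z j : ℕ) : ℝ) = (ytil j : ℝ) - 1 := by
    have hzj : z j = ytil j - 1 := by simp [hz, Ne.symm hij]
    rw [hzj, Nat.cast_sub (by omega : 1 ≤ ytil j)]
    norm_num
  have hdiff : ∑ l, (a l) ^ 2 / (z l : ℝ) - ∑ l, (a l) ^ 2 / (ytil l : ℝ) =
      (a i ^ 2 / ((ytil i : ℝ) + 1) - a i ^ 2 / (ytil i : ℝ)) +
      (a j ^ 2 / ((ytil j : ℝ) - 1) - a j ^ 2 / (ytil j : ℝ)) := by
    rw [← Finset.sum_sub_distrib]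
    have hpt : ∀ l, (a l) ^ 2 / (z l : ℝ) - (a l) ^ 2 / (ytil l : ℝ) =
        (if l = i then (a i ^ 2 / ((ytil i : ℝ) + 1) - a i ^ 2 / (ytil i : ℝ)) else 0) +
        (if l = j then (a j ^ 2 / ((ytil j : ℝ) - 1) - a j ^ 2 / (ytil j : ℝ)) else 0) := by
      intro l
      by_cases h1' : l = i
      · subst h1'; rw [hcast_i]; simp [hij]
      · by_cases h2' : l = j
        · subst h2'; rw [hcast_j]; simp [h1']
        · simp only [hz, if_neg h1', if_neg h2']
          simp [h1', h2']
    rw [Finset.sum_congr rfl fun l _ => hpt l, Finset.sum_add_distrib]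
    simp [Finset.sum_ite_eq']
  -- the strict decrease
  have hstrict : (a i ^ 2 / ((ytil i : ℝ) + 1) - a i ^ 2 / (ytil i : ℝ)) +
      (a j ^ 2 / ((ytil j : ℝ) - 1) - a j ^ 2 / (ytil j : ℝ)) < 0 := by
    have hyi0 : (0:ℝ) < (ytil i : ℝ) := by linarith
    have hyj1 : (0:ℝ) < (ytil j : ℝ) - 1 := by linarith
    have hyj0 : (0:ℝ) < (ytil j : ℝ) := by linarith
    have hai := ha i
    have haj := ha j
    have haj0 : a j ≠ 0 := haj.ne'
    have hai0 : a i ≠ 0 := hai.ne'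
    have hk0 : (k:ℝ) ≠ 0 := hkpos.ne'
    have hS0 : (∑ l, a l) ≠ 0 := hSpos.ne'
    have e1 : a i ^ 2 / ((ytil i : ℝ) + 1) - a i ^ 2 / (ytil i : ℝ) =
        -(a i ^ 2 / ((ytil i : ℝ) * ((ytil i : ℝ) + 1))) := by
      field_simp; ring
    have e2 : a j ^ 2 / ((ytil j : ℝ) - 1) - a j ^ 2 / (ytil j : ℝ) =
        a j ^ 2 / ((ytil j : ℝ) * ((ytil j : ℝ) - 1)) := by
      field_simp; ring
    rw [e1, e2]
    have key : a j ^ 2 / ((ytil j : ℝ) * ((ytil j : ℝ) - 1)) <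
        a i ^ 2 / ((ytil i : ℝ) * ((ytil i : ℝ) + 1)) := by
      have hαi := hαpos i
      have hαj := hαpos j
      have step1 : a j ^ 2 / ((ytil j : ℝ) * ((ytil j : ℝ) - 1)) ≤ a j ^ 2 / (α j) ^ 2 :=
        div_le_div_of_nonneg_left (sq_nonneg _) (pow_pos hαj 2) hjsq
      have step2 : a j ^ 2 / (α j) ^ 2 = (∑ l, a l) ^ 2 / (k:ℝ) ^ 2 := by
        rw [hα j, div_pow, mul_pow, div_div_eq_mul_div,
          div_eq_div_iff (mul_ne_zero (pow_ne_zero 2 hk0) (pow_ne_zero 2 haj0))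
            (pow_ne_zero 2 hk0)]
        ring
      have step3 : a i ^ 2 / (α i) ^ 2 = (∑ l, a l) ^ 2 / (k:ℝ) ^ 2 := by
        rw [hα i, div_pow, mul_pow, div_div_eq_mul_div,
          div_eq_div_iff (mul_ne_zero (pow_ne_zero 2 hk0) (pow_ne_zero 2 hai0))
            (pow_ne_zero 2 hk0)]
        ring
      have step4 : a i ^ 2 / (α i) ^ 2 < a i ^ 2 / ((ytil i : ℝ) * ((ytil i : ℝ) + 1)) := by
        apply div_lt_div_of_pos_left (pow_pos hai 2) (by positivity)
        nlinarith
      linarith [step1, step2, step3, step4]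
    linarith
  linarith [hdiff, hstrict, hle]
end

section
/- Let a_1,…,a_m > 0, k ≥ m an integer, α_i = k·a_i/Σ_j a_j, and for each i let δ_i = 0 if ⌈α_i⌉(⌈α_i⌉−1) ≥ α_i², else δ_i = ⌈α_i⌉ − α_i. Then every optimal integral solution ỹ of the OSA problem satisfies ỹ_i ≥ ⌊α_i − Σ_{j≠i} δ_j⌋ for all i. -/
set_option maxHeartbeats 1000000 in
/-- every optimal integral OSA solution ỹ satisfies
ỹ_i ≥ ⌊α_i − Σ_{j≠i} δ_j⌋ for all i, with δ_j the slack variables. -/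
theorem stmt9 (m k : ℕ) (hm : 2 ≤ m) (hk : m ≤ k)
    (a : Fin m → ℝ) (ha : ∀ i, 0 < a i)
    (α : Fin m → ℝ) (hα : ∀ i, α i = (k : ℝ) * a i / ∑ j, a j)
    (δ : Fin m → ℝ)
    (hδ : ∀ i, δ i =
      if (α i) ^ 2 ≤ (⌈α i⌉ : ℝ) * ((⌈α i⌉ : ℝ) - 1) then 0 else (⌈α i⌉ : ℝ) - α i)
    (ytil : Fin m → ℕ) (h1 : ∀ l, 1 ≤ ytil l) (hbud : ∑ l, ytil l ≤ k)
    (hopt : ∀ z : Fin m → ℕ, (∀ l, 1 ≤ z l) → ∑ l, z l ≤ k →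
      ∑ l, (a l) ^ 2 / (ytil l : ℝ) ≤ ∑ l, (a l) ^ 2 / (z l : ℝ)) :
    ∀ i, ⌊α i - ∑ j ∈ Finset.univ.erase i, δ j⌋ ≤ (ytil i : ℤ) := by
  intro i
  by_contra hcon
  push_neg at hcon
  set S := ∑ j ∈ Finset.univ.erase i, δ j with hSdef
  have A_pos : 0 < ∑ j, a j := Finset.sum_pos (fun j _ => ha j) ⟨i, Finset.mem_univ i⟩
  have hk0 : (0:ℝ) < k := by
    have : 0 < k := by omega
    exact_mod_cast this
  have hαpos : ∀ l, 0 < α l := by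
    intro l; rw [hα]; exact div_pos (mul_pos hk0 (ha l)) A_pos
  have hαsum : ∑ l, α l = (k : ℝ) := by
    have h1' : ∑ l, α l = (∑ l, (k:ℝ) * a l) / (∑ j, a j) := by
      rw [Finset.sum_div]; exact Finset.sum_congr rfl fun l _ => hα l
    rw [h1', ← Finset.mul_sum]
    field_simp
  have hδnn : ∀ l, 0 ≤ δ l := by
    intro l; rw [hδ]
    split
    · exact le_rfl
    · exact sub_nonneg.mpr (Int.le_ceil _)
  have hSnn : 0 ≤ S := Finset.sum_nonneg fun l _ => hδnn l
  -- budget is tight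
  have hbud_eq : ∑ l, ytil l = k := by
    by_contra hne
    have hlt : ∑ l, ytil l + 1 ≤ k := by omega
    set z : Fin m → ℕ := fun l => if l = i then ytil l + 1 else ytil l with hz
    have hz1 : ∀ l, 1 ≤ z l := by
      intro l; have := h1 l; simp only [hz]; split <;> omega
    have hzeq : ∀ l, z l = ytil l + if l = i then 1 else 0 := by
      intro l; simp only [hz]; split <;> omega
    have hzsum : ∑ l, z l = ∑ l, ytil l + 1 := by
      rw [Finset.sum_congr rfl (fun l _ => hzeq l), Finset.sum_add_distrib]
      simp
    have hle := hopt z hz1 (by omega)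
    have hstrict : ∑ l, a l ^ 2 / (z l : ℝ) < ∑ l, a l ^ 2 / (ytil l : ℝ) := by
      apply Finset.sum_lt_sum
      · intro l _
        by_cases h : l = i
        · subst h
          have hy : (0:ℝ) < (ytil l : ℝ) := by exact_mod_cast h1 l
          simp only [hz, if_pos rfl]
          push_cast
          gcongr
          all_goals first
            | positivity
            | linarith
        · simp [hz, h]
      · refine ⟨i, Finset.mem_univ i, ?_⟩
        have hy : (0:ℝ) < (ytil i : ℝ) := by exact_mod_cast h1 i
        simp only [hz, if_pos rfl]
        push_cast
        apply div_lt_div_of_pos_left (pow_pos (ha i) 2) hy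
        linarith
    linarith
  -- consequence of the contradiction hypothesis
  have hfloor : ((ytil i : ℝ)) + 1 ≤ α i - S := by
    have h2 : (ytil i : ℤ) + 1 ≤ ⌊α i - S⌋ := by omega
    have h3 : ((ytil i : ℤ) : ℝ) + 1 ≤ (⌊α i - S⌋ : ℝ) := by exact_mod_cast h2
    have := Int.floor_le (α i - S)
    push_cast at h3
    linarith
  -- find j with ytil j > α j + δ j
  have hyssum : ∑ l ∈ Finset.univ.erase i, ((ytil l : ℝ)) = (k : ℝ) - (ytil i : ℝ) := by
    rw [Finset.sum_erase_eq_sub (Finset.mem_univ i)]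
    have : ∑ l, ((ytil l : ℝ)) = ((∑ l, ytil l : ℕ) : ℝ) := by push_cast; rfl
    rw [this, hbud_eq]
  have hassum : ∑ l ∈ Finset.univ.erase i, α l = (k : ℝ) - α i := by
    rw [Finset.sum_erase_eq_sub (Finset.mem_univ i), hαsum]
  have hsum_erase : ∑ l ∈ Finset.univ.erase i, ((ytil l : ℝ) - α l - δ l)
      = α i - (ytil i : ℝ) - S := by
    rw [Finset.sum_sub_distrib, Finset.sum_sub_distrib, hyssum, hassum, ← hSdef]
    ring
  have hex : ∃ j ∈ Finset.univ.erase i, 0 < (ytil j : ℝ) - α j - δ j := by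
    by_contra h
    push_neg at h
    have hle : ∑ l ∈ Finset.univ.erase i, ((ytil l : ℝ) - α l - δ l) ≤ 0 :=
      Finset.sum_nonpos h
    rw [hsum_erase] at hle
    linarith
  obtain ⟨j, hjmem, hjlt⟩ := hex
  have hij : j ≠ i := Finset.ne_of_mem_erase hjmem
  have hYj : α j + δ j < (ytil j : ℝ) := by linarith
  -- key1 : α j ^ 2 ≤ y_j (y_j - 1)
  have key1 : α j ^ 2 ≤ (ytil j : ℝ) * ((ytil j : ℝ) - 1) := by
    by_cases hc : (α j) ^ 2 ≤ (⌈α j⌉ : ℝ) * ((⌈α j⌉ : ℝ) - 1)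
    · have h0 : δ j = 0 := by rw [hδ j, if_pos hc]
      have hy : α j < (ytil j : ℝ) := by rw [h0] at hYj; linarith
      have hc1 : ⌈α j⌉ ≤ (ytil j : ℤ) := Int.ceil_le.mpr (by exact_mod_cast hy.le)
      have hc2 : 1 ≤ ⌈α j⌉ := Int.ceil_pos.mpr (hαpos j)
      have mono : (⌈α j⌉ : ℤ) * ((⌈α j⌉ : ℤ) - 1) ≤ (ytil j : ℤ) * ((ytil j : ℤ) - 1) := by
        nlinarith
      have mono' : ((⌈α j⌉ : ℝ)) * ((⌈α j⌉ : ℝ) - 1) ≤ (ytil j : ℝ) * ((ytil j : ℝ) - 1) := by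
        exact_mod_cast mono
      linarith
    · have hδj : δ j = (⌈α j⌉ : ℝ) - α j := by rw [hδ j, if_neg hc]
      have hy : (⌈α j⌉ : ℝ) < (ytil j : ℝ) := by rw [hδj] at hYj; linarith
      have hy' : ⌈α j⌉ < (ytil j : ℤ) := by exact_mod_cast hy
      have hy'' : ⌈α j⌉ + 1 ≤ (ytil j : ℤ) := hy'
      have hcast : (⌈α j⌉ : ℝ) + 1 ≤ (ytil j : ℝ) := by exact_mod_cast hy''
      have hce : α j ≤ (⌈α j⌉ : ℝ) := Int.le_ceil _
      nlinarith [hαpos j]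
  have hyj2 : 2 ≤ ytil j := by
    by_contra h
    have h1j := h1 j
    have : ytil j = 1 := by omega
    rw [this] at key1
    norm_num at key1
    nlinarith [hαpos j]
  have key2 : (ytil i : ℝ) * ((ytil i : ℝ) + 1) < α i ^ 2 := by
    have h1i : (1:ℝ) ≤ (ytil i : ℝ) := by exact_mod_cast h1 i
    nlinarith
  -- exchange argument
  set z : Fin m → ℕ := fun l => if l = i then ytil i + 1 else if l = j then ytil j - 1 else ytil l
    with hzdef
  have hzi : z i = ytil i + 1 := by simp [hzdef]
  have hzj : z j = ytil j - 1 := by simp [hzdef, hij]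
  have hzo : ∀ l, l ≠ i → l ≠ j → z l = ytil l := by
    intro l hli hlj; simp [hzdef, hli, hlj]
  have hz1 : ∀ l, 1 ≤ z l := by
    intro l
    by_cases hli : l = i
    · subst hli; rw [hzi]; omega
    by_cases hlj : l = j
    · subst hlj; rw [hzj]; omega
    · rw [hzo l hli hlj]; exact h1 l
  have hjmem' : j ∈ Finset.univ.erase i := hjmem
  have hsplitN : ∀ f : Fin m → ℕ, ∑ l, f l
      = f i + (f j + ∑ l ∈ (Finset.univ.erase i).erase j, f l) := by
    intro f
    rw [Finset.add_sum_erase _ f hjmem', Finset.add_sum_erase _ f (Finset.mem_univ i)]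
  have hrestN : ∑ l ∈ (Finset.univ.erase i).erase j, z l
      = ∑ l ∈ (Finset.univ.erase i).erase j, ytil l := by
    apply Finset.sum_congr rfl
    intro l hl
    have hlj : l ≠ j := Finset.ne_of_mem_erase hl
    have hli : l ≠ i := Finset.ne_of_mem_erase (Finset.mem_of_mem_erase hl)
    exact hzo l hli hlj
  have hzsum : ∑ l, z l ≤ k := by
    have e1 := hsplitN z
    have e2 := hsplitN ytil
    rw [hrestN, hzi, hzj] at e1
    omega
  have hmain := hopt z hz1 hzsum
  have hsplitR : ∀ f : Fin m → ℝ, ∑ l, f l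
      = f i + (f j + ∑ l ∈ (Finset.univ.erase i).erase j, f l) := by
    intro f
    rw [Finset.add_sum_erase _ f hjmem', Finset.add_sum_erase _ f (Finset.mem_univ i)]
  rw [hsplitR (fun l => a l ^ 2 / (ytil l : ℝ)), hsplitR (fun l => a l ^ 2 / (z l : ℝ))] at hmain
  have hrestR : ∑ l ∈ (Finset.univ.erase i).erase j, a l ^ 2 / (z l : ℝ)
      = ∑ l ∈ (Finset.univ.erase i).erase j, a l ^ 2 / (ytil l : ℝ) := by
    apply Finset.sum_congr rfl
    intro l hl
    have hlj : l ≠ j := Finset.ne_of_mem_erase hl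
    have hli : l ≠ i := Finset.ne_of_mem_erase (Finset.mem_of_mem_erase hl)
    rw [hzo l hli hlj]
  simp only [hrestR] at hmain
  have hcastzi : ((z i : ℕ) : ℝ) = (ytil i : ℝ) + 1 := by rw [hzi]; push_cast; ring
  have hcastzj : ((z j : ℕ) : ℝ) = (ytil j : ℝ) - 1 := by
    rw [hzj]
    have : (1:ℕ) ≤ ytil j := h1 j
    push_cast [this]
    ring
  rw [hcastzi, hcastzj] at hmain
  have hpair : a i ^ 2 / (ytil i : ℝ) + a j ^ 2 / (ytil j : ℝ)
      ≤ a i ^ 2 / ((ytil i : ℝ) + 1) + a j ^ 2 / ((ytil j : ℝ) - 1) := by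
    linarith
  have hYi1 : (1:ℝ) ≤ (ytil i : ℝ) := by exact_mod_cast h1 i
  have hYj1 : (2:ℝ) ≤ (ytil j : ℝ) := by exact_mod_cast hyj2
  have d1 : a i ^ 2 / (ytil i : ℝ) - a i ^ 2 / ((ytil i : ℝ) + 1)
      = a i ^ 2 / ((ytil i : ℝ) * ((ytil i : ℝ) + 1)) := by
    field_simp
    ring
  have d2 : a j ^ 2 / ((ytil j : ℝ) - 1) - a j ^ 2 / (ytil j : ℝ)
      = a j ^ 2 / ((ytil j : ℝ) * ((ytil j : ℝ) - 1)) := by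
    rw [div_sub_div _ _ (by linarith) (by linarith)]
    ring_nf
  have h3 : a i ^ 2 / ((ytil i : ℝ) * ((ytil i : ℝ) + 1))
      ≤ a j ^ 2 / ((ytil j : ℝ) * ((ytil j : ℝ) - 1)) := by linarith
  have cross : a i ^ 2 * ((ytil j : ℝ) * ((ytil j : ℝ) - 1))
      ≤ a j ^ 2 * ((ytil i : ℝ) * ((ytil i : ℝ) + 1)) :=
    (div_le_div_iff₀ (by nlinarith) (by nlinarith)).mp h3
  have hprop : a i * α j = a j * α i := by
    rw [hα, hα]
    field_simp
  have t1 : a i ^ 2 * α j ^ 2 ≤ a i ^ 2 * ((ytil j : ℝ) * ((ytil j : ℝ) - 1)) :=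
    mul_le_mul_of_nonneg_left key1 (sq_nonneg (a i))
  have t2 : a j ^ 2 * ((ytil i : ℝ) * ((ytil i : ℝ) + 1)) < a j ^ 2 * α i ^ 2 :=
    mul_lt_mul_of_pos_left key2 (pow_pos (ha j) 2)
  have t3 : a i ^ 2 * α j ^ 2 = a j ^ 2 * α i ^ 2 := by
    have := congrArg (fun x => x ^ 2) hprop
    simp only [mul_pow] at this
    linarith
  linarith
end

section
/- The optimal allocation map of the OSA problem is bi-monotone: if θ_i increases (with other coordinates fixed) then the i-th coordinate of the (leading) optimal allocation φ_i(θ) does not decrease; if θ_j decreases for some j ≠ i (with other coordinates fixed) then φ_i(θ) does not decrease. -/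
private lemma sum_update_eq {m : ℕ} (F : Fin m → ℕ → ℝ) (w : Fin m → ℕ) (i : Fin m) (v : ℕ) :
    ∑ l, F l (Function.update w i v l) = ∑ l, F l (w l) - F i (w i) + F i v := by
  classical
  have h : ∀ l, F l (Function.update w i v l)
      = Function.update (fun l => F l (w l)) i (F i v) l := by
    intro l
    by_cases hl : l = i
    · subst hl; simp
    · simp [Function.update_of_ne hl]
  rw [Finset.sum_congr rfl (fun l _ => h l),
    Finset.sum_update_of_mem (Finset.mem_univ i)]
  have h2 : ∑ l, F l (w l)
      = F i (w i) + ∑ x ∈ Finset.univ \ {i}, F x (w x) := by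
    rw [Finset.sdiff_singleton_eq_erase]
    exact (Finset.add_sum_erase _ _ (Finset.mem_univ i)).symm
  rw [h2]; ring

private lemma sum_update_eq' {m : ℕ} (n : Fin m → ℕ) (τ : Fin m → ℝ) (w : Fin m → ℕ)
    (i : Fin m) (v : ℕ) :
    ∑ l, (n l : ℝ) ^ 2 * τ l / (Function.update w i v l : ℝ)
      = ∑ l, (n l : ℝ) ^ 2 * τ l / (w l : ℝ)
        - (n i : ℝ) ^ 2 * τ i / (w i : ℝ) + (n i : ℝ) ^ 2 * τ i / (v : ℝ) :=
  sum_update_eq (fun p t => (n p : ℝ) ^ 2 * τ p / (t : ℝ)) w i v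

private lemma sum_update_nat {m : ℕ} (w : Fin m → ℕ) (i : Fin m) (v : ℕ) :
    ∑ l, Function.update w i v l + w i = ∑ l, w l + v := by
  classical
  rw [Finset.sum_update_of_mem (Finset.mem_univ i)]
  have h2 : ∑ l, w l = w i + ∑ x ∈ Finset.univ \ {i}, w x := by
    rw [Finset.sdiff_singleton_eq_erase]
    exact (Finset.add_sum_erase _ _ (Finset.mem_univ i)).symm
  omega

private lemma frac_chain {a b t s : ℝ} (ha : 0 ≤ a) (hab : a ≤ b) (ht : 1 ≤ t)
    (hts : t + 1 ≤ s) :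
    a / (s - 1) - a / s ≤ b / t - b / (t + 1) := by
  have ht0 : 0 < t := by linarith
  have ht1 : 0 < t + 1 := by linarith
  have hs1 : 0 < s - 1 := by linarith
  have hs0 : 0 < s := by linarith
  have e1 : a / (s - 1) - a / s = a / ((s - 1) * s) := by field_simp; ring
  have e2 : b / t - b / (t + 1) = b / (t * (t + 1)) := by field_simp; ring
  rw [e1, e2]
  exact div_le_div₀ (le_trans ha hab) hab (by positivity) (by nlinarith)

private lemma key {m : ℕ} (k : ℕ) (n : Fin m → ℕ)
    (φ : (Fin m → ℝ) → (Fin m → ℕ))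
    (hfeas : ∀ θ : Fin m → ℝ, (∀ l, 1 ≤ φ θ l) ∧ ∑ l, φ θ l ≤ k)
    (hopt : ∀ θ : Fin m → ℝ, (∀ j, θ j ∈ Set.Icc (0:ℝ) 1) →
      ∀ z : Fin m → ℕ, (∀ l, 1 ≤ z l) → ∑ l, z l ≤ k →
      ∑ l, (n l : ℝ) ^ 2 * θ l / (φ θ l : ℝ) ≤ ∑ l, (n l : ℝ) ^ 2 * θ l / (z l : ℝ))
    (hlex : ∀ θ : Fin m → ℝ, (∀ j, θ j ∈ Set.Icc (0:ℝ) 1) →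
      ∀ z : Fin m → ℕ, (∀ l, 1 ≤ z l) → ∑ l, z l ≤ k →
      ∑ l, (n l : ℝ) ^ 2 * θ l / (z l : ℝ) = ∑ l, (n l : ℝ) ^ 2 * θ l / (φ θ l : ℝ) →
      z ≠ φ θ → ∃ i : Fin m, φ θ i < z i ∧ ∀ j < i, φ θ j = z j)
    (θ θ' : Fin m → ℝ) (hθ : ∀ j, θ j ∈ Set.Icc (0:ℝ) 1)
    (hθ' : ∀ j, θ' j ∈ Set.Icc (0:ℝ) 1)
    (i : Fin m) (h1 : θ i ≤ θ' i) (h2 : ∀ l, l ≠ i → θ' l ≤ θ l) :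
    φ θ i ≤ φ θ' i := by
  by_contra hcon
  push_neg at hcon
  obtain ⟨hy1, hyk⟩ := hfeas θ
  obtain ⟨hy1', hyk'⟩ := hfeas θ'
  set y := φ θ with hy
  set y' := φ θ' with hy'
  -- hcon : y' i < y i
  have hA0 : (0:ℝ) ≤ (n i : ℝ) ^ 2 * θ i := mul_nonneg (sq_nonneg _) (hθ i).1
  have hA'0 : (0:ℝ) ≤ (n i : ℝ) ^ 2 * θ' i := mul_nonneg (sq_nonneg _) (hθ' i).1
  have hAA' : (n i : ℝ) ^ 2 * θ i ≤ (n i : ℝ) ^ 2 * θ' i :=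
    mul_le_mul_of_nonneg_left h1 (sq_nonneg _)
  have hu2 : 2 ≤ y i := by have := hy1' i; omega
  by_cases hcase : ∑ l, Function.update y' i (y i) l ≤ k
  · -- Case A : extra budget available around y'
    have hz1 : ∀ l, 1 ≤ Function.update y' i (y i) l := by
      intro l
      by_cases hl : l = i
      · subst hl; rw [Function.update_self]; omega
      · rw [Function.update_of_ne hl]; exact hy1' l
    have hopt1 := hopt θ' hθ' _ hz1 hcase
    rw [sum_update_eq' n θ' y' i (y i)] at hopt1
    have hlt : ((y' i : ℝ)) < (y i : ℝ) := by exact_mod_cast hcon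
    have hpos : (0:ℝ) < (y' i : ℝ) := by exact_mod_cast hy1' i
    have hA'z : (n i : ℝ) ^ 2 * θ' i = 0 := by
      by_contra hne
      have hA'pos : 0 < (n i : ℝ) ^ 2 * θ' i := lt_of_le_of_ne hA'0 (Ne.symm hne)
      have : (n i : ℝ) ^ 2 * θ' i / (y i : ℝ) < (n i : ℝ) ^ 2 * θ' i / (y' i : ℝ) :=
        div_lt_div_of_pos_left hA'pos hpos hlt
      linarith
    have hAz : (n i : ℝ) ^ 2 * θ i = 0 := le_antisymm (by linarith) hA0
    -- now reduce y at i : same objective, lex-smaller, contradiction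
    have hz1b : ∀ l, 1 ≤ Function.update y i (y' i) l := by
      intro l
      by_cases hl : l = i
      · subst hl; rw [Function.update_self]; exact hy1' _
      · rw [Function.update_of_ne hl]; exact hy1 l
    have hsum := sum_update_nat y i (y' i)
    have hzk : ∑ l, Function.update y i (y' i) l ≤ k := by omega
    have heq : ∑ l, (n l : ℝ) ^ 2 * θ l / (Function.update y i (y' i) l : ℝ)
        = ∑ l, (n l : ℝ) ^ 2 * θ l / (y l : ℝ) := by
      rw [sum_update_eq' n θ y i (y' i), hAz]
      simp
    have hne : Function.update y i (y' i) ≠ y := by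
      intro h
      have := congrFun h i
      rw [Function.update_self] at this
      omega
    obtain ⟨p, hp, -⟩ := hlex θ hθ _ hz1b hzk heq hne
    rw [← hy] at hp
    by_cases hpi : p = i
    · rw [hpi, Function.update_self] at hp; omega
    · rw [Function.update_of_ne hpi] at hp; exact lt_irrefl _ hp
  · -- Case B : some other coordinate must have grown
    have hex : ∃ l, l ≠ i ∧ y l < y' l := by
      by_contra hno
      push_neg at hno
      apply hcase
      calc ∑ l, Function.update y' i (y i) l ≤ ∑ l, y l := by
            apply Finset.sum_le_sum
            intro l _
            by_cases hl : l = i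
            · subst hl; rw [Function.update_self]
            · rw [Function.update_of_ne hl]; exact hno l hl
        _ ≤ k := hyk
    obtain ⟨l, hli, hvl⟩ := hex
    have hil : i ≠ l := Ne.symm hli
    -- natural number facts
    have hv1 : 1 ≤ y l := hy1 l
    have hv'2 : 2 ≤ y' l := by omega
    -- the two exchange points
    set z : Fin m → ℕ := Function.update (Function.update y i (y i - 1)) l (y l + 1) with hzdef
    set z' : Fin m → ℕ := Function.update (Function.update y' i (y' i + 1)) l (y' l - 1) with hz'def
    have hz1 : ∀ p, 1 ≤ z p := by
      intro p
      by_cases hpl : p = l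
      · subst hpl; rw [hzdef, Function.update_self]; omega
      · rw [hzdef, Function.update_of_ne hpl]
        by_cases hpi : p = i
        · subst hpi; rw [Function.update_self]; omega
        · rw [Function.update_of_ne hpi]; exact hy1 p
    have hz'1 : ∀ p, 1 ≤ z' p := by
      intro p
      by_cases hpl : p = l
      · subst hpl; rw [hz'def, Function.update_self]; omega
      · rw [hz'def, Function.update_of_ne hpl]
        by_cases hpi : p = i
        · subst hpi; rw [Function.update_self]; omega
        · rw [Function.update_of_ne hpi]; exact hy1' p
    have hs1 := sum_update_nat (Function.update y i (y i - 1)) l (y l + 1)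
    rw [Function.update_of_ne hli] at hs1
    have hs2 := sum_update_nat y i (y i - 1)
    have hzk : ∑ p, z p ≤ k := by rw [hzdef]; omega
    have hs1' := sum_update_nat (Function.update y' i (y' i + 1)) l (y' l - 1)
    rw [Function.update_of_ne hli] at hs1'
    have hs2' := sum_update_nat y' i (y' i + 1)
    have hz'k : ∑ p, z' p ≤ k := by rw [hz'def]; omega
    -- casts
    have cu : ((y i - 1 : ℕ) : ℝ) = (y i : ℝ) - 1 := by
      rw [Nat.cast_sub (by omega : 1 ≤ y i), Nat.cast_one]
    have cv' : ((y' l - 1 : ℕ) : ℝ) = (y' l : ℝ) - 1 := by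
      rw [Nat.cast_sub (by omega : 1 ≤ y' l), Nat.cast_one]
    -- objective value of z and z'
    have hobjz : ∑ p, (n p : ℝ) ^ 2 * θ p / (z p : ℝ)
        = ∑ p, (n p : ℝ) ^ 2 * θ p / (y p : ℝ)
          - (n i : ℝ) ^ 2 * θ i / (y i : ℝ) + (n i : ℝ) ^ 2 * θ i / ((y i : ℝ) - 1)
          - (n l : ℝ) ^ 2 * θ l / (y l : ℝ) + (n l : ℝ) ^ 2 * θ l / ((y l : ℝ) + 1) := by
      rw [hzdef, sum_update_eq' n θ _ l (y l + 1), Function.update_of_ne hli,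
        sum_update_eq' n θ y i (y i - 1), cu]
      push_cast
      ring
    have hobjz' : ∑ p, (n p : ℝ) ^ 2 * θ' p / (z' p : ℝ)
        = ∑ p, (n p : ℝ) ^ 2 * θ' p / (y' p : ℝ)
          - (n i : ℝ) ^ 2 * θ' i / (y' i : ℝ) + (n i : ℝ) ^ 2 * θ' i / ((y' i : ℝ) + 1)
          - (n l : ℝ) ^ 2 * θ' l / (y' l : ℝ) + (n l : ℝ) ^ 2 * θ' l / ((y' l : ℝ) - 1) := by
      rw [hz'def, sum_update_eq' n θ' _ l (y' l - 1), Function.update_of_ne hli,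
        sum_update_eq' n θ' y' i (y' i + 1), cv']
      push_cast
      ring
    have hopt1 := hopt θ hθ z hz1 hzk
    rw [← hy, hobjz] at hopt1
    have hopt2 := hopt θ' hθ' z' hz'1 hz'k
    rw [← hy', hobjz'] at hopt2
    -- chain of inequalities forces equalities
    have hB0 : (0:ℝ) ≤ (n l : ℝ) ^ 2 * θ l := mul_nonneg (sq_nonneg _) (hθ l).1
    have hB'0 : (0:ℝ) ≤ (n l : ℝ) ^ 2 * θ' l := mul_nonneg (sq_nonneg _) (hθ' l).1
    have hB'B : (n l : ℝ) ^ 2 * θ' l ≤ (n l : ℝ) ^ 2 * θ l :=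
      mul_le_mul_of_nonneg_left (h2 l hli) (sq_nonneg _)
    have hU'1 : (1:ℝ) ≤ (y' i : ℝ) := by exact_mod_cast hy1' i
    have hU'U : (y' i : ℝ) + 1 ≤ (y i : ℝ) := by exact_mod_cast (by omega : y' i + 1 ≤ y i)
    have hV1 : (1:ℝ) ≤ (y l : ℝ) := by exact_mod_cast hv1
    have hVV' : (y l : ℝ) + 1 ≤ (y' l : ℝ) := by exact_mod_cast (by omega : y l + 1 ≤ y' l)
    have hPP' : (n i : ℝ) ^ 2 * θ i / ((y i : ℝ) - 1) - (n i : ℝ) ^ 2 * θ i / (y i : ℝ)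
        ≤ (n i : ℝ) ^ 2 * θ' i / (y' i : ℝ) - (n i : ℝ) ^ 2 * θ' i / ((y' i : ℝ) + 1) :=
      frac_chain hA0 hAA' hU'1 hU'U
    have hQ'Q : (n l : ℝ) ^ 2 * θ' l / ((y' l : ℝ) - 1) - (n l : ℝ) ^ 2 * θ' l / (y' l : ℝ)
        ≤ (n l : ℝ) ^ 2 * θ l / (y l : ℝ) - (n l : ℝ) ^ 2 * θ l / ((y l : ℝ) + 1) :=
      frac_chain hB'0 hB'B hV1 hVV'
    -- hopt1 : 0 ≤ P - Q ;  hopt2 : 0 ≤ Q' - P' ; hPP' : P ≤ P' ; hQ'Q : Q' ≤ Q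
    -- hence all equal; in particular both exchanges keep the objectives unchanged
    have heqz : ∑ p, (n p : ℝ) ^ 2 * θ p / (z p : ℝ)
        = ∑ p, (n p : ℝ) ^ 2 * θ p / (y p : ℝ) := by
      rw [hobjz]; linarith
    have heqz' : ∑ p, (n p : ℝ) ^ 2 * θ' p / (z' p : ℝ)
        = ∑ p, (n p : ℝ) ^ 2 * θ' p / (y' p : ℝ) := by
      rw [hobjz']; linarith
    -- lex contradiction for θ
    have hnez : z ≠ y := by
      intro h
      have := congrFun h i
      rw [hzdef, Function.update_of_ne hil, Function.update_self] at this
      omega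
    obtain ⟨p, hp, hq⟩ := hlex θ hθ z hz1 hzk heqz hnez
    simp only [← hy] at hp hq
    have hpl : p = l := by
      by_contra hpl
      rw [hzdef, Function.update_of_ne hpl] at hp
      by_cases hpi : p = i
      · rw [hpi, Function.update_self] at hp; omega
      · rw [Function.update_of_ne hpi] at hp; exact lt_irrefl _ hp
    rw [hpl] at hp hq
    -- lex contradiction for θ'
    have hnez' : z' ≠ y' := by
      intro h
      have := congrFun h l
      rw [hz'def, Function.update_self] at this
      omega
    obtain ⟨p', hp', hq'⟩ := hlex θ' hθ' z' hz'1 hz'k heqz' hnez'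
    simp only [← hy'] at hp' hq'
    have hp'i : p' = i := by
      by_contra hp'i
      rw [hz'def] at hp'
      by_cases hp'l : p' = l
      · rw [hp'l, Function.update_self] at hp'; omega
      · rw [Function.update_of_ne hp'l, Function.update_of_ne hp'i] at hp'
        exact lt_irrefl _ hp'
    rw [hp'i] at hp' hq'
    rcases lt_or_gt_of_ne hli with hlt | hgt
    · -- l < i : first-difference of z' vs y' would be at l
      have := hq' l hlt
      rw [hz'def, Function.update_self] at this
      omega
    · -- i < l : first-difference of z vs y would be at i
      have := hq i hgt
      rw [hzdef, Function.update_of_ne hil, Function.update_self] at this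
      omega


/-- bi-monotonicity of the leading (lexicographically-first) optimal
allocation of the OSA problem: φ_i(θ) does not decrease when θ_i increases, and
does not decrease when some θ_j (j ≠ i) decreases. -/
theorem stmt12 (m k : ℕ) (hm : 0 < m) (hk : m ≤ k)
    (n : Fin m → ℕ) (hn : ∀ i, 0 < n i)
    (φ : (Fin m → ℝ) → (Fin m → ℕ))
    (hfeas : ∀ θ : Fin m → ℝ, (∀ l, 1 ≤ φ θ l) ∧ ∑ l, φ θ l ≤ k)
    (hopt : ∀ θ : Fin m → ℝ, (∀ j, θ j ∈ Set.Icc (0:ℝ) 1) →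
      ∀ z : Fin m → ℕ, (∀ l, 1 ≤ z l) → ∑ l, z l ≤ k →
      ∑ l, (n l : ℝ) ^ 2 * θ l / (φ θ l : ℝ) ≤ ∑ l, (n l : ℝ) ^ 2 * θ l / (z l : ℝ))
    (hlex : ∀ θ : Fin m → ℝ, (∀ j, θ j ∈ Set.Icc (0:ℝ) 1) →
      ∀ z : Fin m → ℕ, (∀ l, 1 ≤ z l) → ∑ l, z l ≤ k →
      ∑ l, (n l : ℝ) ^ 2 * θ l / (z l : ℝ) = ∑ l, (n l : ℝ) ^ 2 * θ l / (φ θ l : ℝ) →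
      z ≠ φ θ → ∃ i : Fin m, φ θ i < z i ∧ ∀ j < i, φ θ j = z j) :
    ∀ θ : Fin m → ℝ, (∀ j, θ j ∈ Set.Icc (0:ℝ) 1) → ∀ i : Fin m, ∀ c : ℝ,
      (θ i ≤ c → c ≤ 1 → φ θ i ≤ φ (Function.update θ i c) i) ∧
      (∀ j, j ≠ i → 0 ≤ c → c ≤ θ j → φ θ i ≤ φ (Function.update θ j c) i) := by
  intro θ hθ i c
  constructor
  · intro hc hc1
    apply key k n φ hfeas hopt hlex θ _ hθ _ i
    · rw [Function.update_self]; exact hc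
    · intro l hl
      rw [Function.update_of_ne hl]
    · intro j
      by_cases hj : j = i
      · subst hj
        rw [Function.update_self]
        exact ⟨le_trans (hθ j).1 hc, hc1⟩
      · rw [Function.update_of_ne hj]
        exact hθ j
  · intro j hj hc0 hcj
    apply key k n φ hfeas hopt hlex θ _ hθ _ i
    · rw [Function.update_of_ne (Ne.symm hj)]
    · intro l hl
      by_cases hlj : l = j
      · subst hlj
        rw [Function.update_self]
        exact hcj
      · rw [Function.update_of_ne hlj]
    · intro p
      by_cases hp : p = j
      · subst hp
        rw [Function.update_self]
        exact ⟨hc0, le_trans hcj (hθ p).2⟩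
      · rw [Function.update_of_ne hp]
        exact hθ p
end

section
/- In CPE-L, for every arm i, the consistent optimality radius satisfies Λ_i ≥ Δ_i / width(Y), and consequently H^Λ = Σ_i 1/Λ_i² ≤ width(Y)² · Σ_i 1/Δ_i² = width(Y)² · H^Δ. -/
open scoped ENNReal

/-!
Let `S` be optimal for `θ` and suppose `S` and `S*` disagree on arm `i`. An exchange pair
`(P, Q)` through `i`, with `P ⊆ S \ S*` and `Q ⊆ S* \ S`, turns `S*` into a decision `T` that
also disagrees with `S*` on `i`, so `Δᵢ ≤ θ*(S*) - θ*(T) = θ*(Q) - θ*(P)`; the reverse swap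
turns `S` into a decision, so optimality of `S` gives `θ(Q) - θ(P) ≤ 0`. Subtracting,
`Δᵢ ≤ Σ_{P ∪ Q} |θⱼ - θ*ⱼ| ≤ w ‖θ - θ*‖_∞`, hence `Λᵢ ≥ Δᵢ / w`. Where no `θ` flips arm `i`,
`Λᵢ = ∞`; otherwise `Δᵢ > 0` by uniqueness of `S*`, and squaring and inverting gives the
bound on `H^Λ` term by term.
-/

open Finset

section Exchange

variable {α : Type*} [DecidableEq α]

theorem Finset.sum_sdiff_union_of_subset {M : Type*} [AddCommGroup M] (f : α → M)
    {S P Q : Finset α} (hP : P ⊆ S) (hQ : Disjoint S Q) :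
    ∑ j ∈ (S \ P) ∪ Q, f j = ∑ j ∈ S, f j - ∑ j ∈ P, f j + ∑ j ∈ Q, f j := by
  rw [sum_union (disjoint_of_subset_left sdiff_subset hQ), sum_sdiff_eq_sub hP]

theorem sum_sub_sum_exchange_le_sum_abs_sub (θ θ' : α → ℝ) {S S' P Q : Finset α}
    (hP : P ⊆ S \ S') (hQ : Q ⊆ S' \ S)
    (hopt : ∑ j ∈ (S \ P) ∪ Q, θ j ≤ ∑ j ∈ S, θ j) :
    ∑ j ∈ S', θ' j - ∑ j ∈ (S' \ Q) ∪ P, θ' j ≤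
      ∑ j ∈ P, |θ j - θ' j| + ∑ j ∈ Q, |θ j - θ' j| := by
  have hPS : P ⊆ S := hP.trans sdiff_subset
  have hQS' : Q ⊆ S' := hQ.trans sdiff_subset
  have hSQ : Disjoint S Q := disjoint_of_subset_right hQ disjoint_sdiff
  have hS'P : Disjoint S' P := disjoint_of_subset_right hP disjoint_sdiff
  rw [sum_sdiff_union_of_subset θ hPS hSQ] at hopt
  rw [sum_sdiff_union_of_subset θ' hQS' hS'P]
  have hPabs : ∑ j ∈ P, (θ j - θ' j) ≤ ∑ j ∈ P, |θ j - θ' j| :=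
    sum_le_sum fun j _ => le_abs_self _
  have hQabs : ∑ j ∈ Q, (θ' j - θ j) ≤ ∑ j ∈ Q, |θ j - θ' j| :=
    sum_le_sum fun j _ => abs_sub_comm (θ j) (θ' j) ▸ le_abs_self _
  rw [sum_sub_distrib] at hPabs hQabs
  linarith

def IsExchangeClass (Y : Finset (Finset α)) (B : Finset (Finset α × Finset α)) : Prop :=
  ∀ S ∈ Y, ∀ S' ∈ Y, S ≠ S' → ∀ i ∈ S \ S', ∃ b ∈ B,
    i ∈ b.2 ∧ b.1 ⊆ S' \ S ∧ b.2 ⊆ S \ S' ∧ (S \ b.2) ∪ b.1 ∈ Y ∧ (S' \ b.1) ∪ b.2 ∈ Y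

theorem IsExchangeClass.exists_exchange {Y : Finset (Finset α)}
    {B : Finset (Finset α × Finset α)} (hB : IsExchangeClass Y B) {w : ℕ}
    (hw : ∀ b ∈ B, b.1.card + b.2.card ≤ w) {S S' : Finset α} (hS : S ∈ Y) (hS' : S' ∈ Y)
    {i : α} (hi : ¬(i ∈ S ↔ i ∈ S')) :
    ∃ P Q : Finset α, P.card + Q.card ≤ w ∧ P ⊆ S \ S' ∧ Q ⊆ S' \ S ∧
      (S' \ Q) ∪ P ∈ Y ∧ ¬(i ∈ (S' \ Q) ∪ P ↔ i ∈ S') ∧ (S \ P) ∪ Q ∈ Y := by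
  by_cases hiS' : i ∈ S'
  · have hiS : i ∉ S := fun h => hi (iff_of_true h hiS')
    obtain ⟨b, hb, hib, h1, h2, hT, hU⟩ :=
      hB S' hS' S hS (fun h => hiS (h ▸ hiS')) i (mem_sdiff.mpr ⟨hiS', hiS⟩)
    have hiT : i ∉ (S' \ b.2) ∪ b.1 := by
      simp only [mem_union, mem_sdiff, hib, not_true, and_false, false_or]
      exact fun h => hiS (mem_sdiff.mp (h1 h)).1
    exact ⟨b.1, b.2, hw b hb, h1, h2, hT, by simp [hiT, hiS'], hU⟩
  · have hiS : i ∈ S := by tauto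
    obtain ⟨b, hb, hib, h1, h2, hU, hT⟩ :=
      hB S hS S' hS' (fun h => hiS' (h ▸ hiS)) i (mem_sdiff.mpr ⟨hiS, hiS'⟩)
    refine ⟨b.2, b.1, (add_comm _ _).trans_le (hw b hb), h2, h1, hT, ?_, hU⟩
    simp [hib, hiS']

end Exchange

section RewardGap

variable {α : Type*}

noncomputable def rewardGap (Y : Finset (Finset α)) (θ : α → ℝ) (S : Finset α) (i : α) : ℝ :=
  ∑ j ∈ S, θ j - sSup ((fun T => ∑ j ∈ T, θ j) '' {T | T ∈ Y ∧ ¬((i ∈ T) ↔ (i ∈ S))})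

variable {Y : Finset (Finset α)} {θ : α → ℝ} {S T : Finset α} {i : α}

theorem rewardGap_le (hT : T ∈ Y) (hi : ¬(i ∈ T ↔ i ∈ S)) :
    rewardGap Y θ S i ≤ ∑ j ∈ S, θ j - ∑ j ∈ T, θ j := by
  have hfin : ((fun T => ∑ j ∈ T, θ j) '' {T | T ∈ Y ∧ ¬((i ∈ T) ↔ (i ∈ S))}).Finite :=
    (Y.finite_toSet.subset fun _ h => h.1).image _
  exact sub_le_sub_left (le_csSup hfin.bddAbove ⟨T, ⟨hT, hi⟩, rfl⟩) _

theorem rewardGap_pos (huniq : ∀ T ∈ Y, T ≠ S → ∑ j ∈ T, θ j < ∑ j ∈ S, θ j)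
    (hT : T ∈ Y) (hi : ¬(i ∈ T ↔ i ∈ S)) : 0 < rewardGap Y θ S i := by
  set A := (fun T => ∑ j ∈ T, θ j) '' {T | T ∈ Y ∧ ¬((i ∈ T) ↔ (i ∈ S))}
  have hfin : A.Finite := (Y.finite_toSet.subset fun _ h => h.1).image _
  have hne : A.Nonempty := ⟨_, T, ⟨hT, hi⟩, rfl⟩
  obtain ⟨T', ⟨hT', hiT'⟩, hsup⟩ := hne.csSup_mem hfin
  have hlt := huniq T' hT' fun h => hiT' (h ▸ Iff.rfl)
  rw [rewardGap, ← hsup]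
  linarith

theorem rewardGap_le_mul_norm_sub [Fintype α] [DecidableEq α]
    {B : Finset (Finset α × Finset α)} (hB : IsExchangeClass Y B) {w : ℕ}
    (hw : ∀ b ∈ B, b.1.card + b.2.card ≤ w) {θ' : α → ℝ} {S' : Finset α} (hS' : S' ∈ Y)
    (hS : S ∈ Y) (hopt : ∀ U ∈ Y, ∑ j ∈ U, θ j ≤ ∑ j ∈ S, θ j) (hi : ¬(i ∈ S ↔ i ∈ S')) :
    rewardGap Y θ' S' i ≤ w * ‖θ - θ'‖ := by
  obtain ⟨P, Q, hcard, hP, hQ, hT, hiT, hU⟩ := hB.exists_exchange hw hS hS' hi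
  have hsum_le (R : Finset α) : ∑ j ∈ R, |θ j - θ' j| ≤ R.card * ‖θ - θ'‖ := by
    rw [← nsmul_eq_mul]
    exact sum_le_card_nsmul _ _ _ fun j _ => norm_le_pi_norm (θ - θ') j
  calc rewardGap Y θ' S' i
      ≤ ∑ j ∈ S', θ' j - ∑ j ∈ (S' \ Q) ∪ P, θ' j := rewardGap_le hT hiT
    _ ≤ ∑ j ∈ P, |θ j - θ' j| + ∑ j ∈ Q, |θ j - θ' j| :=
        sum_sub_sum_exchange_le_sum_abs_sub θ θ' hP hQ (hopt _ hU)
    _ ≤ (P.card + Q.card : ℕ) * ‖θ - θ'‖ := by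
        push_cast
        linarith [hsum_le P, hsum_le Q]
    _ ≤ w * ‖θ - θ'‖ := by gcongr

end RewardGap

theorem ENNReal.ofReal_norm_eq_iSup_abs {ι : Type*} [Fintype ι] (x : ι → ℝ) :
    ENNReal.ofReal ‖x‖ = ⨆ j, ENNReal.ofReal |x j| := by
  simp_rw [← Real.norm_eq_abs, ofReal_norm, enorm_eq_nnnorm, Pi.nnnorm_def,
    ENNReal.coe_finset_sup, Finset.sup_eq_iSup, Finset.mem_univ, iSup_pos]

theorem ENNReal.inv_sq_le_ofReal_inv_sq {x : ℝ} {L : ℝ≥0∞} (hx : 0 < x)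
    (h : ENNReal.ofReal x ≤ L) : (L ^ 2)⁻¹ ≤ ENNReal.ofReal (x ^ 2)⁻¹ := by
  rw [ENNReal.ofReal_inv_of_pos (by positivity), ENNReal.ofReal_pow hx.le]
  exact ENNReal.inv_le_inv.mpr (pow_le_pow_left₀ zero_le h 2)

theorem stmt15_general (m : ℕ)
    (Y : Finset (Finset (Fin m)))
    (θstar : Fin m → ℝ)
    (Sstar : Finset (Fin m)) (hSstar : Sstar ∈ Y)
    (huniq : ∀ S ∈ Y, S ≠ Sstar → ∑ j ∈ S, θstar j < ∑ j ∈ Sstar, θstar j)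
    (φ : (Fin m → ℝ) → Finset (Fin m))
    (hφ : ∀ θ : Fin m → ℝ, φ θ ∈ Y ∧ ∀ S ∈ Y, ∑ j ∈ S, θ j ≤ ∑ j ∈ φ θ, θ j)
    (hφstar : φ θstar = Sstar)
    (B : Finset (Finset (Fin m) × Finset (Fin m)))
    (hexch : ∀ S ∈ Y, ∀ S' ∈ Y, S ≠ S' → ∀ i ∈ S \ S', ∃ b ∈ B,
      i ∈ b.2 ∧ b.1 ⊆ S' \ S ∧ b.2 ⊆ S \ S' ∧
      (S \ b.2) ∪ b.1 ∈ Y ∧ (S' \ b.1) ∪ b.2 ∈ Y)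
    (w : ℕ) (hw : 0 < w) (hwidth : ∀ b ∈ B, b.1.card + b.2.card ≤ w)
    (Δ : Fin m → ℝ)
    (hΔ : ∀ i, Δ i = ∑ j ∈ Sstar, θstar j -
      sSup ((fun S => ∑ j ∈ S, θstar j) '' {S | S ∈ Y ∧ ¬ ((i ∈ S) ↔ (i ∈ Sstar))}))
    (Λ : Fin m → ℝ≥0∞)
    (hΛ : ∀ i, Λ i = ⨅ (θ : Fin m → ℝ)
      (_ : (∀ j, θ j ∈ Set.Icc (0:ℝ) 1) ∧ ¬ ((i ∈ φ θ) ↔ (i ∈ φ θstar))),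
      ⨆ j, ENNReal.ofReal |θ j - θstar j|) :
    (∀ i, ENNReal.ofReal (Δ i / w) ≤ Λ i) ∧
    ∑ i, (Λ i ^ 2)⁻¹ ≤ ENNReal.ofReal ((w : ℝ) ^ 2 * ∑ i, 1 / (Δ i) ^ 2) := by
  have hgap : ∀ i, Δ i = rewardGap Y θstar Sstar i := hΔ
  have hwR : (0 : ℝ) < w := Nat.cast_pos.mpr hw
  have hradius : ∀ i, ENNReal.ofReal (Δ i / w) ≤ Λ i := fun i => by
    rw [hΛ i, hφstar]
    refine le_iInf₂ fun θ hθ => ?_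
    rw [← ENNReal.ofReal_norm_eq_iSup_abs (fun j => θ j - θstar j)]
    refine ENNReal.ofReal_le_ofReal (div_le_of_le_mul₀ hwR.le (norm_nonneg _) ?_)
    rw [hgap, mul_comm]
    exact rewardGap_le_mul_norm_sub hexch hwidth hSstar (hφ θ).1 (hφ θ).2 hθ.2
  refine ⟨hradius, ?_⟩
  have hterm : ∀ i, (Λ i ^ 2)⁻¹ ≤ ENNReal.ofReal ((w : ℝ) ^ 2 * (1 / Δ i ^ 2)) := fun i => by
    by_cases hflip : ∃ θ : Fin m → ℝ,
        (∀ j, θ j ∈ Set.Icc (0:ℝ) 1) ∧ ¬((i ∈ φ θ) ↔ (i ∈ φ θstar))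
    · obtain ⟨θ, -, hθ⟩ := hflip
      rw [hφstar] at hθ
      have hΔpos : 0 < Δ i := hgap i ▸ rewardGap_pos huniq (hφ θ).1 hθ
      convert ENNReal.inv_sq_le_ofReal_inv_sq (div_pos hΔpos hwR) (hradius i) using 2
      field_simp
    · have hΛtop : Λ i = ⊤ := by
        rw [hΛ i]
        exact iInf₂_eq_top.mpr fun θ hθ => absurd ⟨θ, hθ⟩ hflip
      simp [hΛtop]
  calc ∑ i, (Λ i ^ 2)⁻¹
      ≤ ∑ i, ENNReal.ofReal ((w : ℝ) ^ 2 * (1 / Δ i ^ 2)) := sum_le_sum fun i _ => hterm i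
    _ = ENNReal.ofReal ((w : ℝ) ^ 2 * ∑ i, 1 / Δ i ^ 2) := by
        rw [mul_sum, ENNReal.ofReal_sum_of_nonneg fun i _ => by positivity]

/-- in CPE-L, for every arm i, Λ_i ≥ Δ_i / width(Y), and hence
H^Λ = Σ_i 1/Λ_i² ≤ width(Y)² · Σ_i 1/Δ_i², where the bound holds for any exchange
class B for Y whose exchange sets all have size at most w. -/
theorem stmt15 (m : ℕ) (hm : 0 < m)
    (Y : Finset (Finset (Fin m)))
    (θstar : Fin m → ℝ) (hθstar : ∀ j, θstar j ∈ Set.Icc (0:ℝ) 1)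
    (Sstar : Finset (Fin m)) (hSstar : Sstar ∈ Y)
    (huniq : ∀ S ∈ Y, S ≠ Sstar → ∑ j ∈ S, θstar j < ∑ j ∈ Sstar, θstar j)
    (φ : (Fin m → ℝ) → Finset (Fin m))
    (hφ : ∀ θ : Fin m → ℝ, φ θ ∈ Y ∧ ∀ S ∈ Y, ∑ j ∈ S, θ j ≤ ∑ j ∈ φ θ, θ j)
    (hφstar : φ θstar = Sstar)
    (B : Finset (Finset (Fin m) × Finset (Fin m)))
    (hdisj : ∀ b ∈ B, Disjoint b.1 b.2)
    (hexch : ∀ S ∈ Y, ∀ S' ∈ Y, S ≠ S' → ∀ i ∈ S \ S', ∃ b ∈ B,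
      i ∈ b.2 ∧ b.1 ⊆ S' \ S ∧ b.2 ⊆ S \ S' ∧
      (S \ b.2) ∪ b.1 ∈ Y ∧ (S' \ b.1) ∪ b.2 ∈ Y)
    (w : ℕ) (hw : 0 < w) (hwidth : ∀ b ∈ B, b.1.card + b.2.card ≤ w)
    (Δ : Fin m → ℝ)
    (hΔ : ∀ i, Δ i = ∑ j ∈ Sstar, θstar j -
      sSup ((fun S => ∑ j ∈ S, θstar j) '' {S | S ∈ Y ∧ ¬ ((i ∈ S) ↔ (i ∈ Sstar))}))
    (Λ : Fin m → ℝ≥0∞)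
    (hΛ : ∀ i, Λ i = ⨅ (θ : Fin m → ℝ)
      (_ : (∀ j, θ j ∈ Set.Icc (0:ℝ) 1) ∧ ¬ ((i ∈ φ θ) ↔ (i ∈ φ θstar))),
      ⨆ j, ENNReal.ofReal |θ j - θstar j|) :
    (∀ i, ENNReal.ofReal (Δ i / w) ≤ Λ i) ∧
    ∑ i, (Λ i ^ 2)⁻¹ ≤ ENNReal.ofReal ((w : ℝ) ^ 2 * ∑ i, 1 / (Δ i) ^ 2) :=
  stmt15_general m Y θstar Sstar hSstar huniq φ hφ hφstar B hexch w hw hwidth Δ hΔ Λ hΛ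
end
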